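/- arXiv:1707.01227 — 2 statements merged into one kernel-verified Lean document; each statement's English description precedes it below -/
import Mathlib

section
/- For every real number α, the equation 2x - 1 = tanh(α x²) has exactly one solution x in the open interval (0,1). -/
/-!
Existence is the intermediate value theorem: `2x - 1 - tanh (α x²)` is `-1` at `0` and
`1 - tanh α > 0` at `1`. For uniqueness, apply `artanh`: a solution `x ∈ (0,1)` satisfies
`artanh y / (1 + y)² = α / 4` with `y = 2x - 1`, and `y ↦ artanh y / (1 + y)²` is strictly
increasing on `(-1,1)`. Indeed its derivative has the sign of `1 / (1 - y) - 2 artanh y`,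
which is `(1 + r) / 2 - log r > 0` for `r = (1 + y) / (1 - y)`.
-/

open Real Set Topology

namespace Real

@[fun_prop]
theorem continuous_tanh : Continuous tanh := by
  simp_rw [funext tanh_eq_sinh_div_cosh]
  exact continuous_sinh.div continuous_cosh fun x => (cosh_pos x).ne'

theorem hasDerivAt_artanh {y : ℝ} (hy : y ∈ Ioo (-1) 1) :
    HasDerivAt artanh (1 - y ^ 2)⁻¹ y := by
  obtain ⟨hy₁, hy₂⟩ := hy
  have hlog : (fun z => (log (1 + z) - log (1 - z)) / 2) =ᶠ[𝓝 y] artanh := by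
    filter_upwards [Ioo_mem_nhds hy₁ hy₂] with z hz
    rw [artanh_eq_half_log (Ioo_subset_Icc_self hz),
      log_div (by linarith [hz.1]) (by linarith [hz.2])]
    ring
  have hadd : HasDerivAt (fun z => log (1 + z)) (1 + y)⁻¹ y := by
    simpa using ((hasDerivAt_id y).const_add 1).log (by simp; linarith)
  have hsub : HasDerivAt (fun z => log (1 - z)) (-(1 - y)⁻¹) y := by
    simpa [neg_div] using ((hasDerivAt_id y).const_sub 1).log (by simp; linarith)
  have hinv : (1 - y ^ 2)⁻¹ = ((1 + y)⁻¹ - -(1 - y)⁻¹) / 2 := by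
    have : 1 - y ^ 2 ≠ 0 := by nlinarith
    field_simp [show 1 + y ≠ 0 by linarith, show 1 - y ≠ 0 by linarith]
    ring
  rw [hinv]
  exact ((hadd.sub hsub).div_const 2).congr_of_eventuallyEq hlog.symm

theorem log_lt_div_two {r : ℝ} (hr : 0 < r) : log r < r / 2 := by
  have h₁ : log (r / 2) ≤ r / 2 - 1 := log_le_sub_one_of_pos (by positivity)
  have h₂ : log (r / 2) = log r - log 2 := log_div hr.ne' two_ne_zero
  linarith [log_two_lt_d9]

theorem artanh_lt_inv_one_sub_div_two {y : ℝ} (hy : y ∈ Ioo (-1) 1) :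
    artanh y < (1 - y)⁻¹ / 2 := by
  obtain ⟨hy₁, hy₂⟩ := hy
  have h := log_lt_div_two (show 0 < (1 + y) / (1 - y) by apply div_pos <;> linarith)
  have hr : (1 + y) / (1 - y) / 2 = (1 - y)⁻¹ - 2⁻¹ := by field_simp; ring
  rw [artanh_eq_half_log ⟨hy₁.le, hy₂.le⟩]
  linarith

theorem strictMonoOn_artanh_div_one_add_sq :
    StrictMonoOn (fun y => artanh y / (1 + y) ^ 2) (Ioo (-1) 1) := by
  have hderiv : ∀ y ∈ Ioo (-1 : ℝ) 1, HasDerivAt (fun y => artanh y / (1 + y) ^ 2)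
      (((1 - y ^ 2)⁻¹ * (1 + y) ^ 2 - artanh y * (2 * (1 + y))) / ((1 + y) ^ 2) ^ 2) y := by
    intro y hy
    have hsq : HasDerivAt (fun y : ℝ => (1 + y) ^ 2) (2 * (1 + y)) y := by
      simpa using ((hasDerivAt_id' y).const_add 1).fun_pow 2
    exact (hasDerivAt_artanh hy).div hsq (by nlinarith [hy.1])
  apply strictMonoOn_of_hasDerivWithinAt_pos (convex_Ioo _ _)
    (fun y hy => (hderiv y hy).continuousAt.continuousWithinAt)
    (fun y hy => (hderiv y (interior_subset hy)).hasDerivWithinAt)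
  intro y hy
  rw [interior_Ioo] at hy
  obtain ⟨hy₁, hy₂⟩ := hy
  have hkey := artanh_lt_inv_one_sub_div_two ⟨hy₁, hy₂⟩
  have hnum : (1 - y ^ 2)⁻¹ * (1 + y) ^ 2 - artanh y * (2 * (1 + y))
      = 2 * (1 + y) * ((1 - y)⁻¹ / 2 - artanh y) := by
    have : 1 - y ^ 2 ≠ 0 := by nlinarith
    field_simp [show 1 + y ≠ 0 by linarith, show 1 - y ≠ 0 by linarith]
    ring
  rw [hnum]
  have : 0 < 1 + y := by linarith
  have : 0 < (1 - y)⁻¹ / 2 - artanh y := by linarith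
  positivity

end Real

theorem exists_mem_Ioo_two_mul_sub_one_eq_tanh (α : ℝ) :
    ∃ x ∈ Ioo (0 : ℝ) 1, 2 * x - 1 = tanh (α * x ^ 2) := by
  have hcont : ContinuousOn (fun x : ℝ => 2 * x - 1 - tanh (α * x ^ 2)) (Icc 0 1) := by
    fun_prop
  have hsign :
      (0 : ℝ) ∈ Ioo (2 * 0 - 1 - tanh (α * 0 ^ 2)) (2 * 1 - 1 - tanh (α * 1 ^ 2)) := by
    norm_num [tanh_lt_one]
  obtain ⟨x, hx, hzero⟩ := intermediate_value_Ioo zero_le_one hcont hsign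
  exact ⟨x, hx, sub_eq_zero.mp hzero⟩

theorem artanh_div_one_add_sq_eq_of_eq_tanh {α x : ℝ} (hx : x ≠ 0)
    (h : 2 * x - 1 = tanh (α * x ^ 2)) :
    artanh (2 * x - 1) / (1 + (2 * x - 1)) ^ 2 = α / 4 := by
  have hartanh : artanh (2 * x - 1) = α * x ^ 2 := by rw [h, artanh_tanh]
  rw [hartanh]
  field_simp
  ring

theorem stmt_3 (α : ℝ) :
    ∃! x : ℝ, x ∈ Set.Ioo (0 : ℝ) 1 ∧ 2 * x - 1 = Real.tanh (α * x ^ 2) := by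
  obtain ⟨x, hx, hsol⟩ := exists_mem_Ioo_two_mul_sub_one_eq_tanh α
  refine ⟨x, ⟨hx, hsol⟩, fun x' ⟨hx', hsol'⟩ => ?_⟩
  have hmem : ∀ z ∈ Ioo (0 : ℝ) 1, 2 * z - 1 ∈ Ioo (-1 : ℝ) 1 :=
    fun z hz => ⟨by linarith [hz.1], by linarith [hz.2]⟩
  have h : 2 * x' - 1 = 2 * x - 1 :=
    strictMonoOn_artanh_div_one_add_sq.injOn (hmem x' hx') (hmem x hx)
      ((artanh_div_one_add_sq_eq_of_eq_tanh hx'.1.ne' hsol').trans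
        (artanh_div_one_add_sq_eq_of_eq_tanh hx.1.ne' hsol).symm)
  linarith
end

section
/- Let φ : [0,1] → [0,1] be continuous and increasing, and suppose x₀ ∈ [0,1] is the unique solution of φ(x) = x. Assume additionally φ is differentiable at x₀ with φ'(x₀) < 1. Then D := sup_{x ∈ [0,1], x ≠ x₀} |φ(x) - x₀| / |x - x₀| satisfies D < 1. -/
/-!
Consider the slope `g = dslope φ x₀` of `φ` at its fixed point, extended by `g x₀ = φ'`; it is
continuous on `[0, 1]` because `φ` is differentiable at `x₀`. Since `x₀` is the only fixed point and
`φ 0 ≥ 0`, `φ 1 ≤ 1`, the intermediate value theorem puts the graph of `φ` strictly above the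
diagonal left of `x₀` and strictly below it right of `x₀`, so `g < 1` on `[0, 1]`; monotonicity
gives `g ≥ 0`. By compactness `g` attains a maximum `D < 1`, and `|φ x - x₀| = g x * |x - x₀|`.
-/

open Set Function

theorem right_lt_apply_of_forall_not_isFixedPt {f : ℝ → ℝ} {a x : ℝ} (hax : a ≤ x)
    (hcont : ContinuousOn f (Icc a x)) (ha : a ≤ f a) (hfix : ∀ y ∈ Icc a x, ¬IsFixedPt f y) :
    x < f x := by
  by_contra! hx
  have hcont' : ContinuousOn (fun t ↦ f t - t) (Icc a x) := hcont.sub continuousOn_id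
  obtain ⟨y, hy, hy0⟩ :=
    intermediate_value_Icc' hax hcont' ⟨sub_nonpos.2 hx, sub_nonneg.2 ha⟩
  exact hfix y hy (sub_eq_zero.1 hy0)

theorem apply_lt_left_of_forall_not_isFixedPt {f : ℝ → ℝ} {x b : ℝ} (hxb : x ≤ b)
    (hcont : ContinuousOn f (Icc x b)) (hb : f b ≤ b) (hfix : ∀ y ∈ Icc x b, ¬IsFixedPt f y) :
    f x < x := by
  by_contra! hx
  have hcont' : ContinuousOn (fun t ↦ f t - t) (Icc x b) := hcont.sub continuousOn_id
  obtain ⟨y, hy, hy0⟩ :=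
    intermediate_value_Icc' hxb hcont' ⟨sub_nonpos.2 hb, sub_nonneg.2 hx⟩
  exact hfix y hy (sub_eq_zero.1 hy0)

theorem slope_lt_one_of_unique_fixedPt {f : ℝ → ℝ} {a b x₀ x : ℝ}
    (hcont : ContinuousOn f (Icc a b)) (ha : a ≤ f a) (hb : f b ≤ b) (hfix : f x₀ = x₀)
    (huniq : ∀ y ∈ Icc a b, f y = y → y = x₀) (hx : x ∈ Icc a b) (hne : x ≠ x₀) :
    slope f x₀ x < 1 := by
  rcases hne.lt_or_gt with hlt | hgt
  · have hxf : x < f x :=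
      right_lt_apply_of_forall_not_isFixedPt hx.1 (hcont.mono (Icc_subset_Icc_right hx.2)) ha
        fun y hy hyfix ↦ (huniq y ⟨hy.1, hy.2.trans hx.2⟩ hyfix ▸ hy.2).not_gt hlt
    rw [slope_comm, slope_def_field, hfix, div_lt_one (sub_pos.2 hlt)]
    linarith
  · have hfx : f x < x :=
      apply_lt_left_of_forall_not_isFixedPt hx.2 (hcont.mono (Icc_subset_Icc_left hx.1)) hb
        fun y hy hyfix ↦ (huniq y ⟨hx.1.trans hy.1, hy.2⟩ hyfix ▸ hy.1).not_gt hgt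
    rw [slope_def_field, hfix, div_lt_one (sub_pos.2 hgt)]
    linarith

theorem continuousOn_dslope_of_differentiableAt {𝕜 E : Type*} [NontriviallyNormedField 𝕜]
    [NormedAddCommGroup E] [NormedSpace 𝕜 E] {f : 𝕜 → E} {a : 𝕜} {s : Set 𝕜}
    (hf : ContinuousOn f s) (ha : DifferentiableAt 𝕜 f a) : ContinuousOn (dslope f a) s := by
  intro x hx
  rcases eq_or_ne x a with rfl | hne
  · exact (continuousAt_dslope_same.2 ha).continuousWithinAt
  · exact (continuousWithinAt_dslope_of_ne hne).2 (hf x hx)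

theorem stmt_5 (φ : ℝ → ℝ) (x₀ φ' : ℝ)
    (hmaps : Set.MapsTo φ (Set.Icc 0 1) (Set.Icc 0 1))
    (hcont : ContinuousOn φ (Set.Icc 0 1))
    (hmono : MonotoneOn φ (Set.Icc 0 1))
    (hx₀ : x₀ ∈ Set.Icc (0 : ℝ) 1) (hfix : φ x₀ = x₀)
    (huniq : ∀ x ∈ Set.Icc (0 : ℝ) 1, φ x = x → x = x₀)
    (hderiv : HasDerivAt φ φ' x₀) (hφ' : φ' < 1) :
    ∃ D < (1 : ℝ), ∀ x ∈ Set.Icc (0 : ℝ) 1, x ≠ x₀ →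
      |φ x - x₀| ≤ D * |x - x₀| := by
  have hslope_lt : ∀ x ∈ Icc (0 : ℝ) 1, dslope φ x₀ x < 1 := by
    intro x hx
    rcases eq_or_ne x x₀ with rfl | hne
    · rwa [dslope_same, hderiv.deriv]
    · rw [dslope_of_ne _ hne]
      exact slope_lt_one_of_unique_fixedPt hcont (hmaps ⟨le_rfl, zero_le_one⟩).1
        (hmaps ⟨zero_le_one, le_rfl⟩).2 hfix huniq hx hne
  obtain ⟨z, hz, hmax⟩ := isCompact_Icc.exists_isMaxOn (nonempty_Icc.2 zero_le_one)
    (continuousOn_dslope_of_differentiableAt hcont hderiv.differentiableAt)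
  refine ⟨dslope φ x₀ z, hslope_lt z hz, fun x hx hne ↦ ?_⟩
  have hslope_nonneg : 0 ≤ dslope φ x₀ x := by
    rw [dslope_of_ne φ hne]
    exact hmono.slope_nonneg hx₀ hx
  have hφx : φ x - x₀ = (x - x₀) * dslope φ x₀ x := by
    rw [← smul_eq_mul, sub_smul_dslope, hfix]
  calc |φ x - x₀| = dslope φ x₀ x * |x - x₀| := by
        rw [hφx, abs_mul, abs_of_nonneg hslope_nonneg, mul_comm]
    _ ≤ dslope φ x₀ z * |x - x₀| := mul_le_mul_of_nonneg_right (hmax hx) (abs_nonneg _)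
end
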